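/- Let T be a smooth, symmetric, stationary energy-momentum tensor on Minkowski space integrable over Σ, and let Λ be the pure boost in the x¹-direction with velocity parameter β. Writing P̄^α := P^α[Σ, Λ·T] and P^α := P^α[Σ, T], the following hold: P̄⁰ = γ(P⁰ + 2βP¹ + β²∫_Σ T^{11} d³x), P̄¹ = γ((1+β²)P¹ + βP⁰ + β∫_Σ T^{11} d³x), and P̄ⁿ = Pⁿ + β∫_Σ T^{1n} d³x for n = 2,3. -/

import Mathlib

/-!
Stationarity makes `T` constant along the `x⁰`-direction, so on `Σ` the boosted tensor only sees
`T` at the spatial part of `Λ⁻¹ (0, y)`, which is `y` stretched by `γ` in the `x¹`-direction.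
Undoing the stretch costs the Jacobian factor `γ⁻¹`, whence `γ P̄^α = Λ^α_γ Λ^0_δ ∫_Σ T^{γδ}`;
expanding with the entries of `Λ` and `T^{01} = T^{10}` gives the three formulas.
-/

open MeasureTheory

noncomputable section

/-- Embedding of the spacelike hyperplane `Σ = {x⁰ = 0}` into Minkowski space `ℝ⁴`. -/
def emb (y : Fin 3 → ℝ) : Fin 4 → ℝ := Fin.cons 0 y

/-- Total four-momentum `P^α[Σ,T] := ∫_Σ T^{α0} d³x`. -/
def Pmom (T : (Fin 4 → ℝ) → Fin 4 → Fin 4 → ℝ) (α : Fin 4) : ℝ :=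
  ∫ y : Fin 3 → ℝ, T (emb y) α 0

/-- Active Lorentz transformation of a (2,0)-tensor field:
`(Λ·T)^{αβ}(x) = Λ^α_γ Λ^β_δ T^{γδ}(Λ⁻¹x)`. -/
def actT (Λ : Matrix (Fin 4) (Fin 4) ℝ) (T : (Fin 4 → ℝ) → Fin 4 → Fin 4 → ℝ) :
    (Fin 4 → ℝ) → Fin 4 → Fin 4 → ℝ :=
  fun x α β => ∑ γ : Fin 4, ∑ δ : Fin 4, Λ α γ * Λ β δ * T (Λ⁻¹.mulVec x) γ δ

/-- Lorentz factor `γ = 1/√(1−β²)`. -/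
def gam (b : ℝ) : ℝ := 1 / Real.sqrt (1 - b ^ 2)

/-- The pure boost in the `x¹`-direction with velocity parameter `b`
(`Λ⁰₀ = Λ¹₁ = γ`, `Λ⁰₁ = Λ¹₀ = βγ`, `Λ²₂ = Λ³₃ = 1`, all other entries zero). -/
def boost1 (b : ℝ) : Matrix (Fin 4) (Fin 4) ℝ :=
  Matrix.of fun i j =>
    if i = 0 ∧ j = 0 then gam b
    else if i = 0 ∧ j = 1 then b * gam b
    else if i = 1 ∧ j = 0 then b * gam b
    else if i = 1 ∧ j = 1 then gam b
    else if i = j then 1 else 0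

section ChangeOfVariables

variable {E F : Type*} [NormedAddCommGroup E] [NormedSpace ℝ E] [MeasurableSpace E] [BorelSpace E]
  [FiniteDimensional ℝ E] [NormedAddCommGroup F] (μ : Measure E) [μ.IsAddHaarMeasure]
  {f : E →ₗ[ℝ] E}

private def LinearMap.measurableEquivOfDetNeZero (hf : LinearMap.det f ≠ 0) : E ≃ᵐ E :=
  (f.equivOfDetNeZero hf).toContinuousLinearEquiv.toHomeomorph.toMeasurableEquiv

private theorem LinearMap.coe_measurableEquivOfDetNeZero (hf : LinearMap.det f ≠ 0) :
    ⇑(f.measurableEquivOfDetNeZero hf) = f :=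
  rfl

theorem MeasureTheory.integral_comp_linearMap_of_det_ne_zero [NormedSpace ℝ F]
    (hf : LinearMap.det f ≠ 0) (g : E → F) :
    ∫ x, g (f x) ∂μ = |LinearMap.det f|⁻¹ • ∫ x, g x ∂μ := by
  have h := integral_map_equiv (μ := μ) (f.measurableEquivOfDetNeZero hf) g
  rwa [f.coe_measurableEquivOfDetNeZero, Measure.map_linearMap_addHaar_eq_smul_addHaar μ hf,
    integral_smul_measure, ENNReal.toReal_ofReal (abs_nonneg _), abs_inv, eq_comm] at h

theorem MeasureTheory.Integrable.comp_linearMap_of_det_ne_zero (hf : LinearMap.det f ≠ 0)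
    {g : E → F} (hg : Integrable g μ) : Integrable (fun x => g (f x)) μ := by
  have h := integrable_map_equiv (μ := μ) (f.measurableEquivOfDetNeZero hf) g
  rw [f.coe_measurableEquivOfDetNeZero, Measure.map_linearMap_addHaar_eq_smul_addHaar μ hf] at h
  exact h.1 (hg.smul_measure ENNReal.ofReal_ne_top)

end ChangeOfVariables

theorem apply_add_smul_of_fderiv_apply_eq_zero {E F : Type*} [NormedAddCommGroup E]
    [NormedSpace ℝ E] [NormedAddCommGroup F] [NormedSpace ℝ F] {f : E → F}
    (hf : Differentiable ℝ f) {v : E} (hv : ∀ x, fderiv ℝ f x v = 0) (x : E) (t : ℝ) :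
    f (x + t • v) = f x := by
  have hderiv : ∀ s : ℝ, HasDerivAt (fun s => f (x + s • v)) 0 s := fun s => by
    have hline : HasDerivAt (fun s : ℝ => x + s • v) v s :=
      ((hasDerivAt_id s).smul_const v).const_add x |>.congr_deriv (one_smul ℝ v)
    have := (hf _).hasFDerivAt.comp_hasDerivAt s hline
    rwa [hv] at this
  simpa using is_const_of_deriv_eq_zero (fun s => (hderiv s).differentiableAt)
    (fun s => (hderiv s).deriv) t 0

theorem gam_neg (b : ℝ) : gam (-b) = gam b := by simp [gam]

theorem gam_pos {b : ℝ} (hb : b ∈ Set.Ioo (-1 : ℝ) 1) : 0 < gam b := by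
  have : 0 < 1 - b ^ 2 := by nlinarith [hb.1, hb.2]
  unfold gam; positivity

theorem gam_sq_mul_one_sub_sq {b : ℝ} (hb : b ∈ Set.Ioo (-1 : ℝ) 1) :
    gam b ^ 2 * (1 - b ^ 2) = 1 := by
  have : 0 < 1 - b ^ 2 := by nlinarith [hb.1, hb.2]
  rw [gam, div_pow, one_pow, Real.sq_sqrt this.le, one_div_mul_cancel this.ne']

theorem inv_boost1 {b : ℝ} (hb : b ∈ Set.Ioo (-1 : ℝ) 1) : (boost1 b)⁻¹ = boost1 (-b) := by
  refine Matrix.inv_eq_left_inv ?_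
  have := gam_sq_mul_one_sub_sq hb
  ext i j
  fin_cases i <;> fin_cases j <;>
    simp [boost1, Matrix.mul_apply, Fin.sum_univ_four, gam_neg] <;>
    linarith

def lorentzStretch (b : ℝ) : (Fin 3 → ℝ) →ₗ[ℝ] Fin 3 → ℝ :=
  Matrix.toLin' (Matrix.diagonal ![gam b, 1, 1])

theorem lorentzStretch_apply (b : ℝ) (y : Fin 3 → ℝ) :
    lorentzStretch b y = ![gam b * y 0, y 1, y 2] := by
  ext i; fin_cases i <;> simp [lorentzStretch, Matrix.mulVec_diagonal]

theorem det_lorentzStretch (b : ℝ) : LinearMap.det (lorentzStretch b) = gam b := by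
  simp [lorentzStretch, Matrix.det_diagonal, Fin.prod_univ_three]

theorem boost1_neg_mulVec_emb (b : ℝ) (y : Fin 3 → ℝ) :
    (boost1 (-b)).mulVec (emb y)
      = emb (lorentzStretch b y) + (-(b * gam b) * y 0) • Pi.single 0 1 := by
  rw [lorentzStretch_apply]
  funext i
  fin_cases i <;> simp [boost1, emb, Matrix.mulVec, dotProduct, Fin.sum_univ_four, gam_neg] <;> rfl

section StationaryTensor

variable {T : (Fin 4 → ℝ) → Fin 4 → Fin 4 → ℝ} {b : ℝ}

theorem actT_boost1_emb (hT : ∀ α β, Differentiable ℝ fun z => T z α β)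
    (hstat : ∀ x α β, fderiv ℝ (fun z => T z α β) x (Pi.single 0 1) = 0)
    (hb : b ∈ Set.Ioo (-1 : ℝ) 1) (y : Fin 3 → ℝ) (α β : Fin 4) :
    actT (boost1 b) T (emb y) α β
      = ∑ γ, ∑ δ, boost1 b α γ * boost1 b β δ * T (emb (lorentzStretch b y)) γ δ := by
  simp only [actT, inv_boost1 hb, boost1_neg_mulVec_emb,
    apply_add_smul_of_fderiv_apply_eq_zero (hT _ _) (hstat · _ _)]

theorem gam_mul_integral_actT_boost1_emb (hT : ∀ α β, Differentiable ℝ fun z => T z α β)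
    (hstat : ∀ x α β, fderiv ℝ (fun z => T z α β) x (Pi.single 0 1) = 0)
    (hInt : ∀ α β, Integrable fun y : Fin 3 → ℝ => T (emb y) α β)
    (hb : b ∈ Set.Ioo (-1 : ℝ) 1) (α β : Fin 4) :
    gam b * ∫ y, actT (boost1 b) T (emb y) α β
      = ∑ γ, ∑ δ, boost1 b α γ * boost1 b β δ * ∫ y, T (emb y) γ δ := by
  have hdet : LinearMap.det (lorentzStretch b) ≠ 0 := det_lorentzStretch b ▸ (gam_pos hb).ne'
  have hint γ δ : Integrable fun y => T (emb (lorentzStretch b y)) γ δ :=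
    (hInt γ δ).comp_linearMap_of_det_ne_zero volume hdet
  simp_rw [actT_boost1_emb hT hstat hb]
  rw [integral_finsetSum _ fun γ _ => integrable_finsetSum _ fun δ _ => (hint γ δ).const_mul _,
    Finset.mul_sum]
  refine Finset.sum_congr rfl fun γ _ => ?_
  rw [integral_finsetSum _ fun δ _ => (hint γ δ).const_mul _, Finset.mul_sum]
  refine Finset.sum_congr rfl fun δ _ => ?_
  rw [integral_const_mul,
    integral_comp_linearMap_of_det_ne_zero volume hdet (fun y => T (emb y) γ δ),
    det_lorentzStretch, abs_of_pos (gam_pos hb), smul_eq_mul]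
  field_simp [(gam_pos hb).ne']

end StationaryTensor

/-- The transformation law of the four-momentum integrals of a smooth,
symmetric, stationary energy-momentum tensor under the pure boost in the `x¹`-direction:
`P̄⁰ = γ(P⁰ + 2βP¹ + β²∫T¹¹)`, `P̄¹ = γ((1+β²)P¹ + βP⁰ + β∫T¹¹)`,
`P̄ⁿ = Pⁿ + β∫T^{1n}` for `n = 2,3`. -/
theorem boosted_momentum_formulas
    (T : (Fin 4 → ℝ) → Fin 4 → Fin 4 → ℝ)
    (hsmooth : ContDiff ℝ (⊤ : ℕ∞) T)
    (hsym : ∀ x α β, T x α β = T x β α)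
    (hstat : ∀ x α β, fderiv ℝ (fun z => T z α β) x (Pi.single 0 1) = 0)
    (hInt : ∀ α β, Integrable fun y : Fin 3 → ℝ => T (emb y) α β)
    (b : ℝ) (hb : b ∈ Set.Ioo (-1 : ℝ) 1) :
    Pmom (actT (boost1 b) T) 0
        = gam b * (Pmom T 0 + 2 * b * Pmom T 1
            + b ^ 2 * ∫ y : Fin 3 → ℝ, T (emb y) 1 1) ∧
    Pmom (actT (boost1 b) T) 1
        = gam b * ((1 + b ^ 2) * Pmom T 1 + b * Pmom T 0
            + b * ∫ y : Fin 3 → ℝ, T (emb y) 1 1) ∧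
    ∀ n : Fin 4, n = 2 ∨ n = 3 →
      Pmom (actT (boost1 b) T) n
        = Pmom T n + b * ∫ y : Fin 3 → ℝ, T (emb y) 1 n := by
  have hT : ∀ α β, Differentiable ℝ fun z => T z α β := fun α β =>
    differentiable_pi.1 (differentiable_pi.1 (hsmooth.differentiable (by simp)) α) β
  have hP α : gam b * Pmom (actT (boost1 b) T) α
      = ∑ γ, ∑ δ, boost1 b α γ * boost1 b 0 δ * ∫ y, T (emb y) γ δ :=
    gam_mul_integral_actT_boost1_emb hT hstat hInt hb α 0
  have hJ α β : ∫ y, T (emb y) α β = ∫ y, T (emb y) β α :=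
    integral_congr_ae (.of_forall fun y => hsym _ _ _)
  refine ⟨?_, ?_, forall_eq_or_imp.2 ⟨?_, forall_eq.2 ?_⟩⟩
  all_goals
    apply mul_left_cancel₀ (gam_pos hb).ne'
    rw [hP]
    simp only [Pmom, boost1, Matrix.of_apply, Fin.sum_univ_four, true_and, false_and,
      zero_ne_one, one_ne_zero, Fin.reduceEq, ↓reduceIte, zero_mul, mul_zero, add_zero,
      zero_add, hJ 1 0, hJ 2 1, hJ 3 1]
    ring

end
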